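/- For an order-p SIMTP Markov chain with state space S, the min-entropy per bit of the whole process and the average min-entropy per bit of every finite block both equal -log of the (state-independent) maximal transition probability: h∞({X_t}) = h̃∞(X_t,...,X_{t+n} | X_{t-1},...,X_{t-p}) = -log[max_{x_t} P(x_t | x_{t-1},...,x_{t-p})] for every non-negative integer n and every conditioning tuple. -/
import Mathlib


open Real Filter

/-- Maximum of a real-valued function on a finite nonempty type. -/
noncomputable def fmax {α : Type*} [Fintype α] [Nonempty α] (f : α → ℝ) : ℝ :=
  Finset.univ.sup' Finset.univ_nonempty f

/-- Conditional probability of a block of length `n+1` given a prefix of length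
`p`, via the Markov factorization. -/
noncomputable def blockCond {S : Type*} (p n : ℕ)
    (T : (Fin p → S) → S → ℝ) (pre : Fin p → S) (b : Fin (n + 1) → S) : ℝ :=
  ∏ i : Fin (n + 1), T (fun j : Fin p =>
    Fin.append pre b ⟨i.1 + j.1, by have := i.isLt; have := j.isLt; omega⟩) (b i)

noncomputable def argmaxF {α : Type*} [Fintype α] [Nonempty α] (f : α → ℝ) : α :=
  Classical.choose (Finset.exists_mem_eq_sup' (Finset.univ_nonempty (α := α)) f)
lemma argmaxF_spec {α : Type*} [Fintype α] [Nonempty α] (f : α → ℝ) :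
    f (argmaxF f) = fmax f :=
  (Classical.choose_spec (Finset.exists_mem_eq_sup' (Finset.univ_nonempty (α := α)) f)).2.symm
lemma le_fmax {α : Type*} [Fintype α] [Nonempty α] (f : α → ℝ) (x : α) : f x ≤ fmax f :=
  Finset.le_sup' f (Finset.mem_univ x)
lemma fmax_le {α : Type*} [Fintype α] [Nonempty α] {f : α → ℝ} {c : ℝ} (h : ∀ x, f x ≤ c) :
    fmax f ≤ c := Finset.sup'_le _ _ (fun x _ => h x)
noncomputable def maxSeq {S : Type*} [Fintype S] [Nonempty S] (p : ℕ)
    (T : (Fin p → S) → S → ℝ) (pre : Fin p → S) : ℕ → S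
  | k => if h : k < p then pre ⟨k, h⟩
    else argmaxF (T (fun j : Fin p => maxSeq p T pre (k - p + j.1)))
  decreasing_by have := j.isLt; omega
lemma maxSeq_lt {S : Type*} [Fintype S] [Nonempty S] {p : ℕ}
    (T : (Fin p → S) → S → ℝ) (pre : Fin p → S) {k : ℕ} (h : k < p) :
    maxSeq p T pre k = pre ⟨k, h⟩ := by rw [maxSeq, dif_pos h]
lemma maxSeq_ge {S : Type*} [Fintype S] [Nonempty S] {p : ℕ}
    (T : (Fin p → S) → S → ℝ) (pre : Fin p → S) {k : ℕ} (h : p ≤ k) :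
    maxSeq p T pre k = argmaxF (T (fun j : Fin p => maxSeq p T pre (k - p + j.1))) := by
  rw [maxSeq, dif_neg (by omega)]

lemma append_maxSeq {S : Type*} [Fintype S] [Nonempty S] {p n : ℕ}
    (T : (Fin p → S) → S → ℝ) (pre : Fin p → S) (k : Fin (p + (n + 1))) :
    Fin.append pre (fun i : Fin (n + 1) => maxSeq p T pre (p + i.1)) k
      = maxSeq p T pre k.1 := by
  rcases lt_or_ge k.1 p with h | h
  · have : k = Fin.castAdd (n+1) ⟨k.1, h⟩ := by ext; rfl
    rw [this, Fin.append_left]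
    exact (maxSeq_lt T pre h).symm
  · have hk : k = Fin.natAdd p ⟨k.1 - p, by have := k.isLt; omega⟩ := by
      ext; simp; omega
    rw [hk, Fin.append_right]
    show maxSeq p T pre (p + (k.1 - p)) = _
    congr 1

lemma blockCond_maxSeq {S : Type*} [Fintype S] [Nonempty S] {p n : ℕ}
    (T : (Fin p → S) → S → ℝ) (pre pre₀ : Fin p → S)
    (hSIMTP : ∀ pre pre' : Fin p → S, fmax (T pre) = fmax (T pre')) :
    blockCond p n T pre (fun i : Fin (n + 1) => maxSeq p T pre (p + i.1))
      = (fmax (T pre₀)) ^ (n + 1) := by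
  unfold blockCond
  have hc : (fmax (T pre₀)) ^ (n + 1) = ∏ _i : Fin (n + 1), fmax (T pre₀) := by simp
  rw [hc]
  apply Finset.prod_congr rfl
  intro i _
  have hw : (fun j : Fin p => Fin.append pre (fun i : Fin (n + 1) => maxSeq p T pre (p + i.1))
      (⟨i.1 + j.1, by have := i.isLt; have := j.isLt; omega⟩ : Fin (p + (n+1))))
      = fun j : Fin p => maxSeq p T pre (i.1 + j.1) := by
    funext j; rw [append_maxSeq]
  rw [hw]
  have hb : maxSeq p T pre (p + i.1)
      = argmaxF (T (fun j : Fin p => maxSeq p T pre (i.1 + j.1))) := by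
    rw [maxSeq_ge T pre (Nat.le_add_right p i.1)]
    simp only [Nat.add_sub_cancel_left]
  show T (fun j : Fin p => maxSeq p T pre (i.1 + j.1)) (maxSeq p T pre (p + i.1)) = _
  rw [hb]
  exact (argmaxF_spec (T (fun j : Fin p => maxSeq p T pre (i.1 + j.1)))).trans (hSIMTP _ _)

lemma blockCond_le {S : Type*} [Fintype S] [Nonempty S] {p n : ℕ}
    (T : (Fin p → S) → S → ℝ) (pre pre₀ : Fin p → S)
    (hT0 : ∀ pre x, 0 ≤ T pre x)
    (hSIMTP : ∀ pre pre' : Fin p → S, fmax (T pre) = fmax (T pre'))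
    (b : Fin (n + 1) → S) :
    blockCond p n T pre b ≤ (fmax (T pre₀)) ^ (n + 1) := by
  unfold blockCond
  have hc : (fmax (T pre₀)) ^ (n + 1) = ∏ _i : Fin (n + 1), fmax (T pre₀) := by simp
  rw [hc]
  apply Finset.prod_le_prod
  · intro i _; exact hT0 _ _
  · intro i _
    exact (le_fmax _ _).trans (le_of_eq (hSIMTP _ _))

lemma fmax_T_pos {S : Type*} [Fintype S] [Nonempty S] {p : ℕ}
    (T : (Fin p → S) → S → ℝ) (hT1 : ∀ pre, ∑ x, T pre x = 1) (pre₀ : Fin p → S) :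
    0 < fmax (T pre₀) := by
  by_contra hc
  push_neg at hc
  have : ∑ x : S, T pre₀ x ≤ 0 := by
    apply Finset.sum_nonpos
    intro x _
    exact (le_fmax (T pre₀) x).trans hc
  rw [hT1 pre₀] at this
  linarith

lemma fmax_blockCond {S : Type*} [Fintype S] [Nonempty S] {p n : ℕ}
    (T : (Fin p → S) → S → ℝ) (pre pre₀ : Fin p → S)
    (hT0 : ∀ pre x, 0 ≤ T pre x)
    (hSIMTP : ∀ pre pre' : Fin p → S, fmax (T pre) = fmax (T pre')) :
    fmax (blockCond p n T pre) = (fmax (T pre₀)) ^ (n + 1) := by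
  apply le_antisymm
  · exact fmax_le (blockCond_le T pre pre₀ hT0 hSIMTP)
  · rw [← blockCond_maxSeq T pre pre₀ hSIMTP]
    exact le_fmax _ _

lemma perBit_pow (n : ℕ) (x : ℝ) :
    -(1 / ((n : ℝ) + 1)) * Real.logb 2 (x ^ (n + 1)) = -Real.logb 2 x := by
  rw [Real.logb_pow]
  have hn : ((n : ℝ) + 1) ≠ 0 := by positivity
  push_cast
  field_simp

/-- for an order-p SIMTP Markov chain (prefix distribution `μ`,
transition probabilities `T` whose maximum is independent of the conditioning
tuple), the min-entropy per bit of the process (the limit of the per-bit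
min-entropies of the joint block distributions) and the average min-entropy per
bit of every finite block both equal `-log₂` of the state-independent maximal
transition probability. -/
theorem simtp_process_and_avg_minEntropy_perBit {S : Type*} [Fintype S] [Nonempty S]
    (p : ℕ)
    (T : (Fin p → S) → S → ℝ) (μ : (Fin p → S) → ℝ)
    (hT0 : ∀ pre x, 0 ≤ T pre x) (hT1 : ∀ pre, ∑ x, T pre x = 1)
    (hSIMTP : ∀ pre pre' : Fin p → S, fmax (T pre) = fmax (T pre'))
    (hμ0 : ∀ pre, 0 ≤ μ pre) (hμ1 : ∑ pre, μ pre = 1)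
    (pre₀ : Fin p → S) :
    Tendsto (fun n : ℕ => -(1 / ((n : ℝ) + 1)) * Real.logb 2
        (fmax (fun b : Fin (n + 1) → S => ∑ pre, μ pre * blockCond p n T pre b)))
      atTop (nhds (-Real.logb 2 (fmax (T pre₀)))) ∧
    ∀ n : ℕ, -(1 / ((n : ℝ) + 1)) * Real.logb 2
        (∑ pre, μ pre * fmax (blockCond p n T pre)) =
      -Real.logb 2 (fmax (T pre₀)) := by
  set M := fmax (T pre₀) with hM
  have hMpos : 0 < M := fmax_T_pos T hT1 pre₀
  constructor
  · -- limit statement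
    obtain ⟨q, hq⟩ : ∃ q : Fin p → S, 0 < μ q := by
      by_contra h
      push_neg at h
      have : ∑ pre, μ pre ≤ 0 := Finset.sum_nonpos (fun x _ => h x)
      rw [hμ1] at this; linarith
    -- bounds on V n
    have hub : ∀ n : ℕ,
        fmax (fun b : Fin (n + 1) → S => ∑ pre, μ pre * blockCond p n T pre b)
          ≤ M ^ (n + 1) := by
      intro n
      apply fmax_le
      intro b
      calc ∑ pre, μ pre * blockCond p n T pre b
          ≤ ∑ pre, μ pre * M ^ (n + 1) := by
            apply Finset.sum_le_sum
            intro pre _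
            exact mul_le_mul_of_nonneg_left (blockCond_le T pre pre₀ hT0 hSIMTP b) (hμ0 pre)
        _ = M ^ (n + 1) := by rw [← Finset.sum_mul, hμ1, one_mul]
    have hlb : ∀ n : ℕ, μ q * M ^ (n + 1) ≤
        fmax (fun b : Fin (n + 1) → S => ∑ pre, μ pre * blockCond p n T pre b) := by
      intro n
      set bq : Fin (n + 1) → S := fun i => maxSeq p T q (p + i.1) with hbq
      have h1 : μ q * M ^ (n + 1) ≤ ∑ pre, μ pre * blockCond p n T pre bq := by
        rw [← blockCond_maxSeq T q pre₀ hSIMTP (n := n), ← hbq]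
        apply Finset.single_le_sum (f := fun pre => μ pre * blockCond p n T pre bq)
          (fun pre _ => mul_nonneg (hμ0 pre) ?_) (Finset.mem_univ q)
        unfold blockCond
        exact Finset.prod_nonneg (fun i _ => hT0 _ _)
      exact h1.trans
        (le_fmax (fun b : Fin (n + 1) → S => ∑ pre, μ pre * blockCond p n T pre b) bq)
    have hVpos : ∀ n : ℕ, 0 <
        fmax (fun b : Fin (n + 1) → S => ∑ pre, μ pre * blockCond p n T pre b) := by
      intro n
      exact lt_of_lt_of_le (by positivity) (hlb n)
    -- squeeze
    apply tendsto_of_tendsto_of_tendsto_of_le_of_le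
      (g := fun _ : ℕ => -Real.logb 2 M)
      (h := fun n : ℕ => (1 / ((n : ℝ) + 1)) * (-Real.logb 2 (μ q)) + -Real.logb 2 M)
    · exact tendsto_const_nhds
    · have := (tendsto_one_div_add_atTop_nhds_zero_nat).mul_const (-Real.logb 2 (μ q))
      have h2 := this.add (tendsto_const_nhds (x := -Real.logb 2 M) (f := atTop (α := ℕ)))
      simpa using h2
    · intro n
      have hlog : Real.logb 2
          (fmax (fun b : Fin (n + 1) → S => ∑ pre, μ pre * blockCond p n T pre b))
          ≤ Real.logb 2 (M ^ (n + 1)) :=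
        Real.logb_le_logb_of_le one_lt_two (hVpos n) (hub n)
      have hfac : (0 : ℝ) < 1 / ((n : ℝ) + 1) := by positivity
      have := mul_le_mul_of_nonneg_left hlog (le_of_lt hfac)
      rw [← perBit_pow n M]
      nlinarith [this]
    · intro n
      have hlog : Real.logb 2 (μ q * M ^ (n + 1)) ≤ Real.logb 2
          (fmax (fun b : Fin (n + 1) → S => ∑ pre, μ pre * blockCond p n T pre b)) :=
        Real.logb_le_logb_of_le one_lt_two (by positivity) (hlb n)
      rw [Real.logb_mul (ne_of_gt hq) (by positivity), Real.logb_pow] at hlog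
      have hfac : (0 : ℝ) < 1 / ((n : ℝ) + 1) := by positivity
      have h3 := mul_le_mul_of_nonneg_left hlog (le_of_lt hfac)
      have hn : ((n : ℝ) + 1) ≠ 0 := by positivity
      have h4 : (1 / ((n : ℝ) + 1)) * (((n : ℕ) + 1 : ℕ) * Real.logb 2 M)
          = Real.logb 2 M := by push_cast; field_simp
      push_cast at h3 h4 ⊢
      nlinarith [h3]
  · intro n
    have h1 : ∀ pre, fmax (blockCond p n T pre) = M ^ (n + 1) :=
      fun pre => fmax_blockCond T pre pre₀ hT0 hSIMTP
    simp only [h1]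
    rw [← Finset.sum_mul, hμ1, one_mul]
    exact perBit_pow n M
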